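/- arXiv:2208.01300 — 4 statements merged into one kernel-verified Lean document; each statement's English description precedes it below -/
import Mathlib

section
/- (IA 1994 Wald identification) Suppose Y = W·Y(1) + (1−W)·Y(0), W = Z·W(1) + (1−Z)·W(0), the vector (Y(0),Y(1),W(0),W(1)) is independent of Z, P[W(1) ≥ W(0)] = 1, P[W(1) > W(0)] > 0, and 0 < P(Z=1) < 1. Then E[Y(1) − Y(0) | W(1) > W(0)] = (E[Y|Z=1] − E[Y|Z=0]) / (E[W|Z=1] − E[W|Z=0]), and the denominator E[W|Z=1] − E[W|Z=0] = P[W(1) > W(0)] > 0. -/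
open MeasureTheory ProbabilityTheory

/-! Independence means that conditioning on `Z = z` leaves the law of `(Y(0), Y(1), W(0), W(1))`
unchanged, while on `{Z = z}` the observed `W` and `Y` are functions of that vector. So the Wald
numerator and denominator are `E[(W(1) - W(0)) (Y(1) - Y(0))]` and `E[W(1) - W(0)]`. By
monotonicity, `W(1) - W(0)` is a.s. the indicator of the compliers `{W(0) < W(1)}`, which turns
them into `E[Y(1) - Y(0); W(0) < W(1)]` and `P(W(0) < W(1))`. -/

section

variable {Ω β γ E : Type*} [MeasurableSpace Ω] [MeasurableSpace β] [MeasurableSpace γ]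
  [NormedAddCommGroup E] [NormedSpace ℝ E] {μ : Measure Ω}

theorem integral_cond_eq_inv_smul_setIntegral (s : Set Ω) (f : Ω → E) :
    ∫ ω, f ω ∂μ[|s] = (μ.real s)⁻¹ • ∫ ω in s, f ω ∂μ := by
  rw [ProbabilityTheory.cond, integral_smul_measure, ENNReal.toReal_inv, measureReal_def]

theorem ProbabilityTheory.IndepFun.map_cond_preimage [IsFiniteMeasure μ] {X : Ω → β}
    {Z : Ω → γ} (hXZ : IndepFun X Z μ) (hX : AEMeasurable X μ) (hZ : Measurable Z) {s : Set γ}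
    (hs : MeasurableSet s) (hμs : μ (Z ⁻¹' s) ≠ 0) :
    (μ[|Z ⁻¹' s]).map X = μ.map X := by
  ext t ht
  rw [Measure.map_apply_of_aemeasurable (hX.mono_ac cond_absolutelyContinuous) ht,
    Measure.map_apply_of_aemeasurable hX ht, cond_apply (hZ hs), Set.inter_comm,
    hXZ.measure_inter_preimage_eq_mul _ _ ht hs, mul_comm, mul_assoc,
    ENNReal.mul_inv_cancel hμs (measure_ne_top _ _), mul_one]

theorem ProbabilityTheory.IndepFun.integral_cond_eq_of_eqOn [IsFiniteMeasure μ]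
    [MeasurableSingletonClass γ] {X : Ω → β} {Z : Ω → γ} (hXZ : IndepFun X Z μ)
    (hX : AEMeasurable X μ) (hZ : Measurable Z) {z : γ} (hμz : μ {ω | Z ω = z} ≠ 0)
    {F : Ω → E} {g : β → E} (hg : AEStronglyMeasurable g (μ.map X))
    (hF : ∀ ω, Z ω = z → F ω = g (X ω)) :
    ∫ ω, F ω ∂μ[|{ω | Z ω = z}] = ∫ ω, g (X ω) ∂μ := by
  have hz : MeasurableSet {ω | Z ω = z} := hZ (measurableSet_singleton z)
  have hlaw : (μ[|{ω | Z ω = z}]).map X = μ.map X :=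
    hXZ.map_cond_preimage hX hZ (measurableSet_singleton z) hμz
  rw [integral_congr_ae ((ae_cond_mem hz).mono hF),
    ← integral_map (hX.mono_ac cond_absolutelyContinuous) (hlaw ▸ hg), hlaw, integral_map hX hg]

theorem ProbabilityTheory.IndepFun.integral_cond_sub_integral_cond [IsFiniteMeasure μ]
    [MeasurableSingletonClass γ] {X : Ω → β} {Z : Ω → γ} (hXZ : IndepFun X Z μ)
    (hX : AEMeasurable X μ) (hZ : Measurable Z) {z₁ z₀ : γ} (hμz₁ : μ {ω | Z ω = z₁} ≠ 0)
    (hμz₀ : μ {ω | Z ω = z₀} ≠ 0) {F : Ω → E} {g₁ g₀ : β → E}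
    (hg₁ : AEStronglyMeasurable g₁ (μ.map X)) (hg₀ : AEStronglyMeasurable g₀ (μ.map X))
    (hg₁X : Integrable (fun ω => g₁ (X ω)) μ) (hg₀X : Integrable (fun ω => g₀ (X ω)) μ)
    (hF₁ : ∀ ω, Z ω = z₁ → F ω = g₁ (X ω)) (hF₀ : ∀ ω, Z ω = z₀ → F ω = g₀ (X ω)) :
    (∫ ω, F ω ∂μ[|{ω | Z ω = z₁}]) - ∫ ω, F ω ∂μ[|{ω | Z ω = z₀}]
      = ∫ ω, (g₁ (X ω) - g₀ (X ω)) ∂μ := by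
  rw [hXZ.integral_cond_eq_of_eqOn hX hZ hμz₁ hg₁ hF₁,
    hXZ.integral_cond_eq_of_eqOn hX hZ hμz₀ hg₀ hF₀,
    integral_sub hg₁X hg₀X]

theorem integrable_mul_add_one_sub_mul {w y₀ y₁ : Ω → ℝ} (hw : AEStronglyMeasurable w μ)
    (hw₀₁ : ∀ ω, w ω ∈ Set.Icc (0 : ℝ) 1) (hy₀ : Integrable y₀ μ) (hy₁ : Integrable y₁ μ) :
    Integrable (fun ω => w ω * y₁ ω + (1 - w ω) * y₀ ω) μ := by
  refine (hy₁.bdd_mul hw (c := 1) ?_).add (hy₀.bdd_mul (aestronglyMeasurable_const.sub hw)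
      (c := 1) ?_) <;>
    refine .of_forall fun ω => ?_ <;>
    obtain ⟨h₀, h₁⟩ := hw₀₁ ω <;> rw [Real.norm_eq_abs, abs_le] <;> constructor <;> linarith

theorem measure_setOf_eq_zero_ne_zero [IsProbabilityMeasure μ] {Z : Ω → ℝ} (hZ : Measurable Z)
    (hZb : ∀ ω, Z ω = 0 ∨ Z ω = 1) (h : μ {ω | Z ω = 1} < 1) : μ {ω | Z ω = 0} ≠ 0 := by
  have hcompl : {ω | Z ω = 0} = {ω | Z ω = 1}ᶜ := by
    ext ω; rcases hZb ω with h | h <;> simp [h]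
  rw [hcompl, prob_compl_eq_one_sub (s := {ω | Z ω = 1}) (hZ (measurableSet_singleton 1))]
  exact (tsub_pos_of_lt h).ne'

end

theorem mem_Icc_of_eq_zero_or_eq_one {α : Type*} [Zero α] [One α] [PartialOrder α]
    [ZeroLEOneClass α] {a : α} (h : a = 0 ∨ a = 1) : a ∈ Set.Icc (0 : α) 1 := by
  rcases h with rfl | rfl <;> simp

theorem sub_eq_ite_lt_of_eq_zero_or_eq_one {a b : ℝ} (ha : a = 0 ∨ a = 1) (hb : b = 0 ∨ b = 1)
    (hab : a ≤ b) : b - a = if a < b then 1 else 0 := by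
  rcases ha with rfl | rfl <;> rcases hb with rfl | rfl <;> norm_num at *

theorem mul_add_one_sub_mul_sub_eq_ite {a b y₀ y₁ : ℝ} (ha : a = 0 ∨ a = 1)
    (hb : b = 0 ∨ b = 1) (hab : a ≤ b) :
    b * y₁ + (1 - b) * y₀ - (a * y₁ + (1 - a) * y₀) = if a < b then y₁ - y₀ else 0 := by
  rw [show b * y₁ + (1 - b) * y₀ - (a * y₁ + (1 - a) * y₀) = (b - a) * (y₁ - y₀) by ring,
    sub_eq_ite_lt_of_eq_zero_or_eq_one ha hb hab]
  split_ifs <;> simp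

theorem wald_identification_of_LATE_general
    {Ω : Type*} [MeasurableSpace Ω] (μ : Measure Ω) [IsProbabilityMeasure μ]
    (Y0 Y1 W0 W1 Z : Ω → ℝ)
    (hW0m : Measurable W0) (hW1m : Measurable W1) (hZm : Measurable Z)
    (hY0 : Integrable Y0 μ) (hY1 : Integrable Y1 μ)
    (hW0b : ∀ ω, W0 ω = 0 ∨ W0 ω = 1) (hW1b : ∀ ω, W1 ω = 0 ∨ W1 ω = 1)
    (hZb : ∀ ω, Z ω = 0 ∨ Z ω = 1)
    (W Y : Ω → ℝ)
    (hWdef : W = fun ω => Z ω * W1 ω + (1 - Z ω) * W0 ω)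
    (hYdef : Y = fun ω => W ω * Y1 ω + (1 - W ω) * Y0 ω)
    (hindep : IndepFun (fun ω => (Y0 ω, Y1 ω, W0 ω, W1 ω)) Z μ)
    (hmono : ∀ᵐ ω ∂μ, W0 ω ≤ W1 ω)
    (hcomp : 0 < μ {ω | W0 ω < W1 ω})
    (hZ1 : 0 < μ {ω | Z ω = 1}) (hZ1' : μ {ω | Z ω = 1} < 1) :
    (∫ ω, (Y1 ω - Y0 ω) ∂μ[|{ω | W0 ω < W1 ω}]
        = ((∫ ω, Y ω ∂μ[|{ω | Z ω = 1}]) - ∫ ω, Y ω ∂μ[|{ω | Z ω = 0}])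
          / ((∫ ω, W ω ∂μ[|{ω | Z ω = 1}]) - ∫ ω, W ω ∂μ[|{ω | Z ω = 0}]))
    ∧ (∫ ω, W ω ∂μ[|{ω | Z ω = 1}]) - (∫ ω, W ω ∂μ[|{ω | Z ω = 0}])
        = (μ {ω | W0 ω < W1 ω}).toReal
    ∧ 0 < (μ {ω | W0 ω < W1 ω}).toReal := by
  set C := {ω | W0 ω < W1 ω}
  have hC : MeasurableSet C := measurableSet_lt hW0m hW1m
  have hX : AEMeasurable (fun ω => (Y0 ω, Y1 ω, W0 ω, W1 ω)) μ :=
    hY0.aemeasurable.prodMk <| hY1.aemeasurable.prodMk <|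
      hW0m.aemeasurable.prodMk hW1m.aemeasurable
  have hZ0 : μ {ω | Z ω = 0} ≠ 0 := measure_setOf_eq_zero_ne_zero hZm hZb hZ1'
  have hW0I : ∀ ω, W0 ω ∈ Set.Icc (0 : ℝ) 1 := fun ω => mem_Icc_of_eq_zero_or_eq_one (hW0b ω)
  have hW1I : ∀ ω, W1 ω ∈ Set.Icc (0 : ℝ) 1 := fun ω => mem_Icc_of_eq_zero_or_eq_one (hW1b ω)
  have hW : (∫ ω, W ω ∂μ[|{ω | Z ω = 1}]) - (∫ ω, W ω ∂μ[|{ω | Z ω = 0}]) = μ.real C := by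
    rw [hindep.integral_cond_sub_integral_cond hX hZm hZ1.ne' hZ0
        (g₁ := fun p => p.2.2.2) (g₀ := fun p => p.2.2.1) (by fun_prop) (by fun_prop)
        (.of_mem_Icc 0 1 hW1m.aemeasurable (.of_forall hW1I))
        (.of_mem_Icc 0 1 hW0m.aemeasurable (.of_forall hW0I))
        (fun ω hω => by simp [hWdef, hω]) (fun ω hω => by simp [hWdef, hω]),
      ← integral_indicator_one hC]
    exact integral_congr_ae <| hmono.mono fun ω hω =>
      sub_eq_ite_lt_of_eq_zero_or_eq_one (hW0b ω) (hW1b ω) hω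
  have hY : (∫ ω, Y ω ∂μ[|{ω | Z ω = 1}]) - (∫ ω, Y ω ∂μ[|{ω | Z ω = 0}])
      = ∫ ω in C, (Y1 ω - Y0 ω) ∂μ := by
    rw [hindep.integral_cond_sub_integral_cond hX hZm hZ1.ne' hZ0
        (g₁ := fun p => p.2.2.2 * p.2.1 + (1 - p.2.2.2) * p.1)
        (g₀ := fun p => p.2.2.1 * p.2.1 + (1 - p.2.2.1) * p.1) (by fun_prop) (by fun_prop)
        (integrable_mul_add_one_sub_mul hW1m.aestronglyMeasurable hW1I hY0 hY1)
        (integrable_mul_add_one_sub_mul hW0m.aestronglyMeasurable hW0I hY0 hY1)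
        (fun ω hω => by simp [hYdef, hWdef, hω]) (fun ω hω => by simp [hYdef, hWdef, hω]),
      ← integral_indicator hC]
    exact integral_congr_ae <| hmono.mono fun ω hω =>
      mul_add_one_sub_mul_sub_eq_ite (hW0b ω) (hW1b ω) hω
  refine ⟨?_, hW, ENNReal.toReal_pos hcomp.ne' (measure_ne_top _ _)⟩
  rw [hY, hW, integral_cond_eq_inv_smul_setIntegral, smul_eq_mul, inv_mul_eq_div]

/-- (Imbens–Angrist 1994 Wald identification.) Under independence of the potential
outcomes/treatments and the instrument, monotonicity, existence of compliers, and
`0 < P(Z=1) < 1`, the LATE equals the Wald ratio, and the Wald denominator equals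
`P[W(1) > W(0)] > 0`. -/
theorem wald_identification_of_LATE
    {Ω : Type*} [MeasurableSpace Ω] (μ : Measure Ω) [IsProbabilityMeasure μ]
    (Y0 Y1 W0 W1 Z : Ω → ℝ)
    (hY0m : Measurable Y0) (hY1m : Measurable Y1)
    (hW0m : Measurable W0) (hW1m : Measurable W1) (hZm : Measurable Z)
    (hY0 : Integrable Y0 μ) (hY1 : Integrable Y1 μ)
    (hW0b : ∀ ω, W0 ω = 0 ∨ W0 ω = 1) (hW1b : ∀ ω, W1 ω = 0 ∨ W1 ω = 1)
    (hZb : ∀ ω, Z ω = 0 ∨ Z ω = 1)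
    (W Y : Ω → ℝ)
    (hWdef : W = fun ω => Z ω * W1 ω + (1 - Z ω) * W0 ω)
    (hYdef : Y = fun ω => W ω * Y1 ω + (1 - W ω) * Y0 ω)
    (hindep : IndepFun (fun ω => (Y0 ω, Y1 ω, W0 ω, W1 ω)) Z μ)
    (hmono : ∀ᵐ ω ∂μ, W0 ω ≤ W1 ω)
    (hcomp : 0 < μ {ω | W0 ω < W1 ω})
    (hZ1 : 0 < μ {ω | Z ω = 1}) (hZ1' : μ {ω | Z ω = 1} < 1) :
    (∫ ω, (Y1 ω - Y0 ω) ∂μ[|{ω | W0 ω < W1 ω}]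
        = ((∫ ω, Y ω ∂μ[|{ω | Z ω = 1}]) - ∫ ω, Y ω ∂μ[|{ω | Z ω = 0}])
          / ((∫ ω, W ω ∂μ[|{ω | Z ω = 1}]) - ∫ ω, W ω ∂μ[|{ω | Z ω = 0}]))
    ∧ (∫ ω, W ω ∂μ[|{ω | Z ω = 1}]) - (∫ ω, W ω ∂μ[|{ω | Z ω = 0}])
        = (μ {ω | W0 ω < W1 ω}).toReal
    ∧ 0 < (μ {ω | W0 ω < W1 ω}).toReal :=
  wald_identification_of_LATE_general μ Y0 Y1 W0 W1 Z hW0m hW1m hZm hY0 hY1 hW0b hW1b hZb W Y hWdef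
    hYdef hindep hmono hcomp hZ1 hZ1'
end

section
/- Under the assumptions of the LATE identification theorem, the denominator satisfies E[ρ₁(X) − ρ₀(X)] = P[W(1) > W(0)] > 0, so the ratio in the identification formula is well defined. -/
/-! For an event `B` with `P(B | X) > 0` a.s., the conditional expectation under `μ[|B]`
satisfies `P(B | X) · E_B[f | X] = E[1_B f | X]`. Take `B = {Z = z}`: there `W = W(z)`, and
conditional independence of `(W(0), W(1))` and `Z` given `X` factors
`E[1_B W(z) | X] = P(B | X) · E[W(z) | X]`, so `ρ_z(X) = E[W(z) | X]` a.s. Hence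
`E[ρ₁(X) - ρ₀(X)] = E[W(1) - W(0)]`, and by monotonicity `W(1) - W(0)` is the indicator of the
compliers. -/

open MeasureTheory ProbabilityTheory

section

variable {Ω : Type*} {m mΩ : MeasurableSpace Ω} {μ : Measure Ω} {B : Set Ω}

lemma setIntegral_cond (hB : MeasurableSet B) {s : Set Ω} (hs : MeasurableSet s) (f : Ω → ℝ) :
    ∫ x in s, f x ∂μ[|B] = (μ B)⁻¹.toReal * ∫ x in s, B.indicator f x ∂μ := by
  rw [ProbabilityTheory.cond, Measure.restrict_smul, integral_smul_measure,
    Measure.restrict_restrict hs, setIntegral_indicator hB, smul_eq_mul]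

lemma integrable_cond_iff [IsFiniteMeasure μ] (hB : MeasurableSet B) (hμB : μ B ≠ 0)
    {f : Ω → ℝ} : Integrable f μ[|B] ↔ Integrable (B.indicator f) μ :=
  (integrable_smul_measure (ENNReal.inv_ne_zero.2 (measure_ne_top μ B))
    (ENNReal.inv_ne_top.2 hμB)).trans (integrable_indicator_iff hB).symm

lemma condExp_indicator_ae_eq_mul_condExp_cond [IsFiniteMeasure μ] (hm : m ≤ mΩ)
    (hB : MeasurableSet B) (hμB : μ B ≠ 0) {f : Ω → ℝ} (hf : Integrable f μ[|B]) :
    μ[B.indicator f | m] =ᵐ[μ] μ⟦B | m⟧ * (μ[|B])[f | m] := by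
  set g := (μ[|B])[f | m]
  have hg : Integrable (B.indicator g) μ := (integrable_cond_iff hB hμB).1 integrable_condExp
  have hg_ind : B.indicator g = g * B.indicator 1 := by
    ext ω; by_cases hω : ω ∈ B <;> simp [hω]
  have hpull : μ[B.indicator g | m] =ᵐ[μ] g * μ⟦B | m⟧ := by
    rw [hg_ind]
    exact condExp_mul_of_stronglyMeasurable_left stronglyMeasurable_condExp
      (hg_ind ▸ hg) ((integrable_const 1).indicator hB)
  have hsame : μ[B.indicator g | m] =ᵐ[μ] μ[B.indicator f | m] := by
    refine ae_eq_condExp_of_forall_setIntegral_eq hm ((integrable_cond_iff hB hμB).1 hf)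
      (fun s _ _ => integrable_condExp.integrableOn) (fun s hs _ => ?_)
      stronglyMeasurable_condExp.aestronglyMeasurable
    have hversion := setIntegral_condExp hm hf hs
    rw [setIntegral_cond hB (hm s hs), setIntegral_cond hB (hm s hs)] at hversion
    rw [setIntegral_condExp hm hg hs]
    exact mul_left_cancel₀ (ENNReal.toReal_ne_zero.2
      ⟨ENNReal.inv_ne_zero.2 (measure_ne_top μ B), ENNReal.inv_ne_top.2 hμB⟩) hversion
  filter_upwards [hsame, hpull] with ω h₁ h₂
  rw [← h₁, h₂, Pi.mul_apply, Pi.mul_apply, mul_comm]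

lemma measure_ne_zero_of_ae_condExp_indicator_pos [NeZero μ]
    (hpos : ∀ᵐ ω ∂μ, 0 < (μ⟦B | m⟧) ω) : μ B ≠ 0 := by
  intro hB
  have hzero : μ⟦B | m⟧ =ᵐ[μ] 0 := by
    rw [← condExp_zero (m := m) (μ := μ)]
    exact condExp_congr_ae (indicator_meas_zero hB)
  obtain ⟨ω, hω, hω₀⟩ := (hpos.and hzero).exists
  exact hω.ne' hω₀

theorem condExp_cond_ae_eq_condExp [IsFiniteMeasure μ] [NeZero μ] (hm : m ≤ mΩ)
    (hB : MeasurableSet B) {f g : Ω → ℝ} (hg : Integrable g μ) (hfg : Set.EqOn f g B)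
    (hpos : ∀ᵐ ω ∂μ, 0 < (μ⟦B | m⟧) ω)
    (hindep : μ[B.indicator g | m] =ᵐ[μ] μ⟦B | m⟧ * μ[g | m]) :
    (μ[|B])[f | m] =ᵐ[μ] μ[g | m] := by
  have hμB := measure_ne_zero_of_ae_condExp_indicator_pos hpos
  have hf : Integrable f μ[|B] :=
    (integrable_cond_iff hB hμB).2 (Set.indicator_congr hfg ▸ hg.indicator hB)
  have hprod := condExp_indicator_ae_eq_mul_condExp_cond hm hB hμB hf
  rw [Set.indicator_congr hfg] at hprod
  filter_upwards [hprod.symm.trans hindep, hpos] with ω h hω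
  exact mul_left_cancel₀ hω.ne' h

lemma indicator_preimage_one_eq_self {f : Ω → ℝ} (hf : ∀ ω, f ω = 0 ∨ f ω = 1) :
    (f ⁻¹' {1}).indicator (fun _ => (1 : ℝ)) = f := by
  ext ω; rcases hf ω with h | h <;> simp [h]

lemma indicator_preimage_zero_eq_one_sub {f : Ω → ℝ} (hf : ∀ ω, f ω = 0 ∨ f ω = 1) :
    (f ⁻¹' {0}).indicator (fun _ => (1 : ℝ)) = 1 - f := by
  ext ω; rcases hf ω with h | h <;> simp [h]

lemma integrable_of_forall_eq_zero_or_eq_one [IsFiniteMeasure μ] {f : Ω → ℝ}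
    (hfm : Measurable f) (hf : ∀ ω, f ω = 0 ∨ f ω = 1) : Integrable f μ :=
  indicator_preimage_one_eq_self hf ▸
    (integrable_const 1).indicator (hfm (measurableSet_singleton 1))

lemma condExp_indicator_preimage_zero_ae_eq_one_sub [IsFiniteMeasure μ] (hm : m ≤ mΩ)
    {f : Ω → ℝ} (hfm : Measurable f) (hf : ∀ ω, f ω = 0 ∨ f ω = 1) :
    μ⟦f ⁻¹' {0} | m⟧ =ᵐ[μ] 1 - μ[f | m] := by
  have hone : μ[(1 : Ω → ℝ) | m] = 1 := condExp_const hm 1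
  rw [indicator_preimage_zero_eq_one_sub hf]
  conv_rhs => rw [← hone]
  exact condExp_sub (integrable_const 1) (integrable_of_forall_eq_zero_or_eq_one hfm hf) m

lemma integral_sub_eq_measureReal_lt [IsFiniteMeasure μ] {f g : Ω → ℝ}
    (hf : Measurable f) (hg : Measurable g) (hfb : ∀ ω, f ω = 0 ∨ f ω = 1)
    (hgb : ∀ ω, g ω = 0 ∨ g ω = 1) (hfg : f ≤ᵐ[μ] g) :
    ∫ ω, (g ω - f ω) ∂μ = μ.real {ω | f ω < g ω} := by
  rw [← integral_indicator_one (measurableSet_lt hf hg)]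
  refine integral_congr_ae ?_
  filter_upwards [hfg] with ω hω
  rcases hfb ω with h | h <;> rcases hgb ω with h' | h'
  · simp [h, h']
  · simp [h, h']
  · norm_num [h, h'] at hω
  · simp [h, h']

theorem ProbabilityTheory.CondIndepFun.condExp_indicator_preimage_ae_eq_mul [StandardBorelSpace Ω]
    [IsFiniteMeasure μ] {hm : m ≤ mΩ} {β : Type*} [MeasurableSpace β]
    {F : Ω → ℝ} {G : Ω → β} (h : CondIndepFun m hm F G μ) (hF : Measurable F)
    (hG : Measurable G) (hFb : ∀ ω, F ω = 0 ∨ F ω = 1) {t : Set β} (ht : MeasurableSet t) :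
    μ[(G ⁻¹' t).indicator F | m] =ᵐ[μ] μ⟦G ⁻¹' t | m⟧ * μ[F | m] := by
  have hinter : (G ⁻¹' t).indicator F = (F ⁻¹' {1} ∩ G ⁻¹' t).indicator fun _ => 1 := by
    rw [Set.inter_comm, ← Set.indicator_indicator, indicator_preimage_one_eq_self hFb]
  rw [hinter]
  conv_rhs => rw [← indicator_preimage_one_eq_self hFb]
  filter_upwards [(condIndepFun_iff_condExp_inter_preimage_eq_mul hF hG).1 h {1} t
    (measurableSet_singleton 1) ht] with ω hω
  rw [hω, Pi.mul_apply, mul_comm]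

theorem ProbabilityTheory.CondIndepFun.condExp_cond_preimage_ae_eq [StandardBorelSpace Ω]
    [IsFiniteMeasure μ] [NeZero μ] {hm : m ≤ mΩ} {β : Type*} [MeasurableSpace β]
    {F f : Ω → ℝ} {G : Ω → β} (h : CondIndepFun m hm F G μ) (hF : Measurable F)
    (hG : Measurable G) (hFb : ∀ ω, F ω = 0 ∨ F ω = 1) {t : Set β} (ht : MeasurableSet t)
    (hfF : Set.EqOn f F (G ⁻¹' t)) (hpos : ∀ᵐ ω ∂μ, 0 < (μ⟦G ⁻¹' t | m⟧) ω) :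
    (μ[|G ⁻¹' t])[f | m] =ᵐ[μ] μ[F | m] :=
  condExp_cond_ae_eq_condExp hm (hG ht) (integrable_of_forall_eq_zero_or_eq_one hF hFb) hfF hpos
    (h.condExp_indicator_preimage_ae_eq_mul hF hG hFb ht)

end

/-- Under the assumptions of the LATE identification theorem, the denominator satisfies
`E[ρ₁(X) - ρ₀(X)] = P[W(1) > W(0)] > 0`, so the identifying ratio is well defined. -/
theorem late_denominator_eq_complier_prob
    {Ω 𝓧 : Type*} [MeasurableSpace Ω] [StandardBorelSpace Ω] [MeasurableSpace 𝓧]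
    (μ : Measure Ω) [IsProbabilityMeasure μ]
    (W0 W1 Z : Ω → ℝ) (X : Ω → 𝓧)
    (hW0m : Measurable W0) (hW1m : Measurable W1)
    (hZm : Measurable Z) (hX : Measurable X)
    (hW0b : ∀ ω, W0 ω = 0 ∨ W0 ω = 1) (hW1b : ∀ ω, W1 ω = 0 ∨ W1 ω = 1)
    (hZb : ∀ ω, Z ω = 0 ∨ Z ω = 1)
    (W : Ω → ℝ) (hWdef : W = fun ω => Z ω * W1 ω + (1 - Z ω) * W0 ω)
    (hindep : CondIndepFun (MeasurableSpace.comap X inferInstance) hX.comap_le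
      (fun ω => (W0 ω, W1 ω)) Z μ)
    (hmono : ∀ᵐ ω ∂μ, W0 ω ≤ W1 ω)
    (hcomp : 0 < μ {ω | W0 ω < W1 ω})
    (hoverlap : ∀ᵐ ω ∂μ,
      0 < (μ[Z | MeasurableSpace.comap X inferInstance]) ω ∧
        (μ[Z | MeasurableSpace.comap X inferInstance]) ω < 1) :
    (∫ ω, (((μ[|{ω' | Z ω' = 1}])[W | MeasurableSpace.comap X inferInstance]) ω -
           ((μ[|{ω' | Z ω' = 0}])[W | MeasurableSpace.comap X inferInstance]) ω) ∂μ)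
      = (μ {ω | W0 ω < W1 ω}).toReal
    ∧ 0 < (μ {ω | W0 ω < W1 ω}).toReal := by
  set m := MeasurableSpace.comap X inferInstance
  have hm : m ≤ _ := hX.comap_le
  have hW0int := integrable_of_forall_eq_zero_or_eq_one (μ := μ) hW0m hW0b
  have hW1int := integrable_of_forall_eq_zero_or_eq_one (μ := μ) hW1m hW1b
  have hpos1 : ∀ᵐ ω ∂μ, 0 < (μ⟦Z ⁻¹' {1} | m⟧) ω := by
    rw [indicator_preimage_one_eq_self hZb]
    exact hoverlap.mono fun ω h => h.1
  have hpos0 : ∀ᵐ ω ∂μ, 0 < (μ⟦Z ⁻¹' {0} | m⟧) ω := by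
    filter_upwards [hoverlap, condExp_indicator_preimage_zero_ae_eq_one_sub hm hZm hZb]
      with ω h h_sub
    rw [h_sub, Pi.sub_apply, Pi.one_apply]
    linarith [h.2]
  have hρ1 : (μ[|Z ⁻¹' {1}])[W | m] =ᵐ[μ] μ[W1 | m] :=
    (hindep.comp measurable_snd measurable_id).condExp_cond_preimage_ae_eq hW1m hZm hW1b
      (measurableSet_singleton 1) (fun ω (hω : Z ω = 1) => by simp [hWdef, hω]) hpos1
  have hρ0 : (μ[|Z ⁻¹' {0}])[W | m] =ᵐ[μ] μ[W0 | m] :=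
    (hindep.comp measurable_fst measurable_id).condExp_cond_preimage_ae_eq hW0m hZm hW0b
      (measurableSet_singleton 0) (fun ω (hω : Z ω = 0) => by simp [hWdef, hω]) hpos0
  refine ⟨?_, ENNReal.toReal_pos hcomp.ne' (measure_ne_top μ _)⟩
  calc _ = ∫ ω, ((μ[W1 | m]) ω - (μ[W0 | m]) ω) ∂μ := integral_congr_ae (hρ1.sub hρ0)
    _ = ∫ ω, (W1 ω - W0 ω) ∂μ := by
      rw [integral_sub integrable_condExp integrable_condExp, integral_condExp hm,
        integral_condExp hm, integral_sub hW1int hW0int]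
    _ = _ := integral_sub_eq_measureReal_lt hW0m hW1m hW0b hW1b hmono
end

section
/- (Consistency side 2 of double robustness for LATE) Suppose the instrument propensity score is correctly specified, i.e., G(X, γ*) = η(X) = P(Z=1|X) a.s. with 0 < G(X,γ*) < 1, and suppose (α₁*, β₁*) satisfy the population moment condition E[ (Z/G(X,γ*)) (Y − m(α₁* + Xβ₁*)) ] = 0. Then E[m(α₁* + Xβ₁*)] = E[μ₁(X)] = θ₁, even if m(α₁* + Xβ₁*) differs from μ₁(X). -/
/-!
Write `σ = σ(X)`, `t = {Z = 1}` and `μ₁ = E[Y | σ, t]`. The key identity is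
`E[1_t Y | σ] = μ₁ · P(t | σ)`: both sides have the same integral over every `σ`-set,
because `∫_s 1_t h dμ = μ(t) ∫_s h dμ[|t]`. Since `P(t | σ) = G(X)` is nonzero, pulling
`1 / G(X)` and the `σ`-measurable `m(α + Xβ)` out of the conditional expectation gives
`E[(Z / G(X)) (Y - m(α + Xβ)) | σ] = μ₁ - m(α + Xβ)`, and integrating against the moment
condition yields the theorem.
-/

open MeasureTheory ProbabilityTheory
open scoped ENNReal

namespace ProbabilityTheory

variable {Ω : Type*} {m m₀ : MeasurableSpace Ω} {μ : Measure Ω} {t s : Set Ω}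
  {f g Y : Ω → ℝ}

theorem restrict_eq_measure_smul_cond (hμt : μ t ≠ ∞) : μ.restrict t = μ t • μ[|t] := by
  rcases eq_or_ne (μ t) 0 with h0 | h0
  · simp [Measure.restrict_eq_zero.2 h0, h0]
  · rw [cond, smul_smul, ENNReal.mul_inv_cancel h0 hμt, one_smul]

theorem _root_.MeasureTheory.Integrable.cond (hf : Integrable f μ) (t : Set Ω) :
    Integrable f μ[|t] := by
  rcases eq_or_ne (μ t) 0 with h0 | h0
  · simp [cond_eq_zero_of_meas_eq_zero h0]
  · exact hf.restrict.smul_measure (ENNReal.inv_ne_top.2 h0)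

theorem integrable_indicator_of_integrable_cond (ht : MeasurableSet t) (hμt : μ t ≠ ∞)
    (hf : Integrable f μ[|t]) : Integrable (t.indicator f) μ := by
  rw [integrable_indicator_iff ht, IntegrableOn, restrict_eq_measure_smul_cond hμt]
  exact hf.smul_measure hμt

theorem setIntegral_indicator_eq_measureReal_mul_setIntegral_cond (ht : MeasurableSet t)
    (hμt : μ t ≠ ∞) (hs : MeasurableSet s) (f : Ω → ℝ) :
    ∫ x in s, t.indicator f x ∂μ = μ.real t * ∫ x in s, f x ∂μ[|t] := by
  rw [setIntegral_indicator ht, ← Measure.restrict_restrict hs,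
    restrict_eq_measure_smul_cond hμt, Measure.restrict_smul, integral_smul_measure, smul_eq_mul,
    measureReal_def]

theorem setIntegral_indicator_condExp_cond (hm : m ≤ m₀) (ht : MeasurableSet t)
    (hμt : μ t ≠ ∞) (hY : Integrable Y μ[|t]) (hs : MeasurableSet[m] s) :
    ∫ x in s, t.indicator (μ[|t][Y | m]) x ∂μ = ∫ x in s, t.indicator Y x ∂μ := by
  rw [setIntegral_indicator_eq_measureReal_mul_setIntegral_cond ht hμt (hm s hs),
    setIntegral_indicator_eq_measureReal_mul_setIntegral_cond ht hμt (hm s hs),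
    setIntegral_condExp hm hY hs]

theorem condExp_indicator_ae_eq_mul_condExp_indicator_one (ht : MeasurableSet t)
    (hμt : μ t ≠ ∞) (hf : StronglyMeasurable[m] f) (hfi : Integrable (t.indicator f) μ) :
    μ[t.indicator f | m] =ᵐ[μ] f * μ[t.indicator 1 | m] := by
  have hprod : t.indicator f = f * t.indicator 1 := by
    funext x
    simpa using (Set.indicator_mul_right t f 1 (i := x))
  rw [hprod] at hfi ⊢
  exact condExp_mul_of_stronglyMeasurable_left hf hfi
    ((integrable_indicator_iff ht).2 (integrableOn_const hμt))

theorem condExp_indicator_ae_eq_condExp_cond_mul (hm : m ≤ m₀) [SigmaFinite (μ.trim hm)]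
    (ht : MeasurableSet t) (hμt : μ t ≠ ∞) (hY : Integrable Y μ[|t]) :
    μ[t.indicator Y | m] =ᵐ[μ] μ[|t][Y | m] * μ[t.indicator 1 | m] := by
  have hint : Integrable (t.indicator (μ[|t][Y | m])) μ :=
    integrable_indicator_of_integrable_cond ht hμt integrable_condExp
  have hsame : μ[t.indicator (μ[|t][Y | m]) | m] =ᵐ[μ] μ[t.indicator Y | m] :=
    ae_eq_condExp_of_forall_setIntegral_eq hm (integrable_indicator_of_integrable_cond ht hμt hY)
      (fun _ _ _ => integrable_condExp.integrableOn)
      (fun s hs _ => by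
        rw [setIntegral_condExp hm hint hs, setIntegral_indicator_condExp_cond hm ht hμt hY hs])
      stronglyMeasurable_condExp.aestronglyMeasurable
  exact hsame.symm.trans
    (condExp_indicator_ae_eq_mul_condExp_indicator_one ht hμt stronglyMeasurable_condExp hint)

theorem condExp_indicator_sub_div_ae_eq (hm : m ≤ m₀) [SigmaFinite (μ.trim hm)]
    (ht : MeasurableSet t) (hμt : μ t ≠ ∞) (hY : Integrable Y μ[|t])
    (hf : StronglyMeasurable[m] f) (hfi : Integrable f μ)
    (hg : StronglyMeasurable[m] g) (hg0 : ∀ᵐ x ∂μ, g x ≠ 0)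
    (hpg : μ[t.indicator 1 | m] =ᵐ[μ] g)
    (hq : Integrable (fun x => t.indicator (Y - f) x / g x) μ) :
    μ[fun x => t.indicator (Y - f) x / g x | m] =ᵐ[μ] μ[|t][Y | m] - f := by
  have hYi : Integrable (t.indicator Y) μ := integrable_indicator_of_integrable_cond ht hμt hY
  have hfi' : Integrable (t.indicator f) μ := hfi.indicator ht
  have hquot : (fun x => t.indicator (Y - f) x / g x) = g⁻¹ * t.indicator (Y - f) :=
    funext fun x => div_eq_inv_mul _ _
  have hpull : μ[fun x => t.indicator (Y - f) x / g x | m]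
      =ᵐ[μ] g⁻¹ * μ[t.indicator (Y - f) | m] := by
    rw [hquot] at hq ⊢
    exact condExp_mul_of_stronglyMeasurable_left hg.measurable.inv.stronglyMeasurable hq
      (by rw [Set.indicator_sub']; exact hYi.sub hfi')
  have hsplit : μ[t.indicator (Y - f) | m]
      =ᵐ[μ] μ[|t][Y | m] * μ[t.indicator 1 | m] - f * μ[t.indicator 1 | m] := by
    rw [Set.indicator_sub']
    exact (condExp_sub hYi hfi' m).trans
      ((condExp_indicator_ae_eq_condExp_cond_mul hm ht hμt hY).sub
        (condExp_indicator_ae_eq_mul_condExp_indicator_one ht hμt hf hfi'))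
  filter_upwards [hpull, hsplit, hpg, hg0] with x hpullx hsplitx hpgx hg0x
  simp only [hpullx, Pi.mul_apply, hsplitx, Pi.sub_apply, hpgx, Pi.inv_apply]
  field_simp

end ProbabilityTheory

theorem dr_propensity_correct_side_late_general
    {Ω : Type*} [MeasurableSpace Ω] (μ : Measure Ω) [IsProbabilityMeasure μ] {d : ℕ}
    (Y Z : Ω → ℝ) (X : Ω → Fin d → ℝ)
    (hY : Integrable Y μ)
    (hZm : Measurable Z) (hZb : ∀ ω, Z ω = 0 ∨ Z ω = 1)
    (hX : Measurable X)
    (G : (Fin d → ℝ) → ℝ) (hG : Measurable G)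
    (hGrange : ∀ᵐ ω ∂μ, 0 < G (X ω) ∧ G (X ω) < 1)
    (hGcorrect : μ[Z | MeasurableSpace.comap X inferInstance]
      =ᵐ[μ] fun ω => G (X ω))
    (m : ℝ → ℝ) (hm : Measurable m) (α : ℝ) (β : Fin d → ℝ)
    (hmInt : Integrable (fun ω => m (α + ∑ i, β i * X ω i)) μ)
    (hwInt : Integrable
      (fun ω => (Z ω / G (X ω)) * (Y ω - m (α + ∑ i, β i * X ω i))) μ)
    (hμ1Int : Integrable
      ((μ[|{ω | Z ω = 1}])[Y | MeasurableSpace.comap X inferInstance]) μ)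
    (hmoment : ∫ ω, (Z ω / G (X ω)) * (Y ω - m (α + ∑ i, β i * X ω i)) ∂μ = 0) :
    ∫ ω, m (α + ∑ i, β i * X ω i) ∂μ
      = ∫ ω, ((μ[|{ω' | Z ω' = 1}])[Y | MeasurableSpace.comap X inferInstance]) ω ∂μ := by
  set t := {ω | Z ω = 1}
  set f := fun ω => m (α + ∑ i, β i * X ω i)
  have hle : MeasurableSpace.comap X inferInstance ≤ ‹MeasurableSpace Ω› := hX.comap_le
  have hZ : Z = t.indicator 1 := funext fun ω => by rcases hZb ω with h | h <;> simp [t, h]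
  have hW : (fun ω => Z ω / G (X ω) * (Y ω - f ω))
      = fun ω => t.indicator (Y - f) ω / G (X ω) := by
    funext ω
    rcases hZb ω with h | h <;> simp [t, h, div_eq_inv_mul]
  have ht : MeasurableSet t := hZm (measurableSet_singleton 1)
  have hfσ : StronglyMeasurable[MeasurableSpace.comap X inferInstance] f :=
    ((hm.comp (by fun_prop : Measurable fun x : Fin d → ℝ => α + ∑ i, β i * x i)).comp
      (comap_measurable X)).stronglyMeasurable
  have hGσ : StronglyMeasurable[MeasurableSpace.comap X inferInstance] fun ω => G (X ω) :=
    (hG.comp (comap_measurable X)).stronglyMeasurable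
  have hcond := condExp_indicator_sub_div_ae_eq hle ht (measure_ne_top μ t) (hY.cond t) hfσ
    hmInt hGσ (hGrange.mono fun _ h => h.1.ne') (hZ ▸ hGcorrect) (hW ▸ hwInt)
  calc ∫ ω, f ω ∂μ = ∫ ω, (μ[|t])[Y | MeasurableSpace.comap X inferInstance] ω ∂μ
        - ∫ ω, ((μ[|t])[Y | MeasurableSpace.comap X inferInstance] - f) ω ∂μ := by
        rw [integral_sub' hμ1Int hmInt]; ring
    _ = ∫ ω, (μ[|t])[Y | MeasurableSpace.comap X inferInstance] ω ∂μ := by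
        rw [← integral_congr_ae hcond, integral_condExp hle, ← hW, hmoment, sub_zero]

/-- (Consistency side 2 of double robustness for LATE.) If the instrument propensity
score is correctly specified, `G(X,γ*) = P(Z=1|X)` a.s. with `0 < G(X,γ*) < 1`, and the
population moment condition `E[(Z/G(X))(Y - m(α₁* + Xβ₁*))] = 0` holds, then
`E[m(α₁* + Xβ₁*)] = E[μ₁(X)] = θ₁`, even if the mean function is misspecified. -/
theorem dr_propensity_correct_side_late
    {Ω : Type*} [MeasurableSpace Ω] (μ : Measure Ω) [IsProbabilityMeasure μ] {d : ℕ}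
    (Y Z : Ω → ℝ) (X : Ω → Fin d → ℝ)
    (hYm : Measurable Y) (hY : Integrable Y μ)
    (hZm : Measurable Z) (hZb : ∀ ω, Z ω = 0 ∨ Z ω = 1)
    (hX : Measurable X)
    (G : (Fin d → ℝ) → ℝ) (hG : Measurable G)
    (hGrange : ∀ᵐ ω ∂μ, 0 < G (X ω) ∧ G (X ω) < 1)
    (hGcorrect : μ[Z | MeasurableSpace.comap X inferInstance]
      =ᵐ[μ] fun ω => G (X ω))
    (m : ℝ → ℝ) (hm : Measurable m) (α : ℝ) (β : Fin d → ℝ)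
    (hmInt : Integrable (fun ω => m (α + ∑ i, β i * X ω i)) μ)
    (hwInt : Integrable
      (fun ω => (Z ω / G (X ω)) * (Y ω - m (α + ∑ i, β i * X ω i))) μ)
    (hμ1Int : Integrable
      ((μ[|{ω | Z ω = 1}])[Y | MeasurableSpace.comap X inferInstance]) μ)
    (hZ1 : 0 < μ {ω | Z ω = 1})
    (hmoment : ∫ ω, (Z ω / G (X ω)) * (Y ω - m (α + ∑ i, β i * X ω i)) ∂μ = 0) :
    ∫ ω, m (α + ∑ i, β i * X ω i) ∂μ
      = ∫ ω, ((μ[|{ω' | Z ω' = 1}])[Y | MeasurableSpace.comap X inferInstance]) ω ∂μ :=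
  dr_propensity_correct_side_late_general μ Y Z X hY hZm hZb hX G hG hGrange hGcorrect m hm α β
    hmInt hwInt hμ1Int hmoment
end

section
/- (Double robustness for the LATT control mean, propensity-score side) Suppose G(X) = η(X) = P(Z=1|X) a.s. with η(X) < 1 a.s. and P(Z=1) > 0, and suppose (α₀*, β₀*) satisfy E{ [(1−Z)G(X)/(1−G(X))] (Y − m(α₀* + Xβ₀*)) } = 0. Then E[μ₀(X) | Z=1] = E[m(α₀* + Xβ₀*) | Z=1], regardless of whether m(α₀*+Xβ₀*) equals μ₀(X). -/
/-!
Write `F = E[Y | X, Z = 0]` and `M = m(α + Xβ)`, both functions of `X`, and `odds = G/(1 - G)`.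
Conditioning on `X` inside `{Z = 0}` replaces `Y` by `F` in the moment condition:
`E[(1 - Z) · odds · (F - M)] = 0`. Since `E[1 - Z | X] = 1 - G` and `E[Z | X] = G`, for every
function `φ` of `X` both `E[(1 - Z) · odds · φ]` and `E[Z φ]` equal `E[G φ]`; with `φ = F - M`
this gives `E[Z (F - M)] = 0`, i.e. `E[F | Z = 1] = E[M | Z = 1]`. The integrability of
`Z (F - M)` is not assumed: it is carried through the same identity, read for lower integrals
of `|φ|`.
-/

open MeasureTheory ProbabilityTheory
open scoped ENNReal

namespace MeasureTheory

variable {Ω : Type*} {m m0 : MeasurableSpace Ω} {μ : Measure[m0] Ω}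

lemma withDensity_ofReal_condExp_trim (hm : m ≤ m0) [SigmaFinite (μ.trim hm)] {W : Ω → ℝ}
    (hW : Integrable W μ) (hW0 : 0 ≤ᵐ[μ] W) :
    (μ.withDensity fun ω => ENNReal.ofReal (μ[W|m] ω)).trim hm
      = (μ.withDensity fun ω => ENNReal.ofReal (W ω)).trim hm := by
  refine @Measure.ext _ m _ _ fun s hs => ?_
  rw [trim_measurableSet_eq hm hs, trim_measurableSet_eq hm hs,
    withDensity_apply _ (hm s hs), withDensity_apply _ (hm s hs),
    ← ofReal_integral_eq_lintegral_ofReal integrable_condExp.restrict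
      (ae_restrict_of_ae (condExp_nonneg hW0)),
    ← ofReal_integral_eq_lintegral_ofReal hW.restrict (ae_restrict_of_ae hW0),
    setIntegral_condExp hm hW hs]

lemma lintegral_ofReal_condExp_mul (hm : m ≤ m0) [SigmaFinite (μ.trim hm)] {W : Ω → ℝ}
    (hW : Integrable W μ) (hW0 : 0 ≤ᵐ[μ] W) {g : Ω → ℝ≥0∞} (hg : Measurable[m] g) :
    ∫⁻ ω, ENNReal.ofReal (μ[W|m] ω) * g ω ∂μ = ∫⁻ ω, ENNReal.ofReal (W ω) * g ω ∂μ := by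
  have hg0 : AEMeasurable g μ := (hg.mono hm le_rfl).aemeasurable
  calc ∫⁻ ω, ENNReal.ofReal (μ[W|m] ω) * g ω ∂μ
      = ∫⁻ ω, g ω ∂(μ.withDensity fun ω => ENNReal.ofReal (μ[W|m] ω)).trim hm := by
        rw [lintegral_trim hm hg, lintegral_withDensity_eq_lintegral_mul₀
          (stronglyMeasurable_condExp.mono hm).measurable.ennreal_ofReal.aemeasurable hg0]
        rfl
    _ = ∫⁻ ω, ENNReal.ofReal (W ω) * g ω ∂μ := by
        rw [withDensity_ofReal_condExp_trim hm hW hW0, lintegral_trim hm hg,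
          lintegral_withDensity_eq_lintegral_mul₀ hW.aemeasurable.ennreal_ofReal hg0]
        rfl

lemma integrable_condExp_mul_iff (hm : m ≤ m0) [SigmaFinite (μ.trim hm)] {W f : Ω → ℝ}
    (hW : Integrable W μ) (hW0 : 0 ≤ᵐ[μ] W) (hf : StronglyMeasurable[m] f) :
    Integrable (fun ω => μ[W|m] ω * f ω) μ ↔ Integrable (fun ω => W ω * f ω) μ := by
  have hf0 : StronglyMeasurable f := hf.mono hm
  have hfe : Measurable[m] fun ω => ‖f ω‖ₑ := hf.enorm
  have hnorm : ∀ {V : Ω → ℝ}, 0 ≤ᵐ[μ] V →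
      ∫⁻ ω, ‖V ω * f ω‖ₑ ∂μ = ∫⁻ ω, ENNReal.ofReal (V ω) * ‖f ω‖ₑ ∂μ := fun hV0 =>
    lintegral_congr_ae <| by
      filter_upwards [hV0] with ω hω
      rw [enorm_mul, Real.enorm_eq_ofReal hω]
  refine and_congr (iff_of_true ?_ ?_) ?_
  · exact (stronglyMeasurable_condExp.mono hm).aestronglyMeasurable.mul hf0.aestronglyMeasurable
  · exact hW.aestronglyMeasurable.mul hf0.aestronglyMeasurable
  · rw [hasFiniteIntegral_iff_enorm, hasFiniteIntegral_iff_enorm, hnorm hW0,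
      hnorm (condExp_nonneg hW0), lintegral_ofReal_condExp_mul hm hW hW0 hfe]

lemma integral_condExp_mul (hm : m ≤ m0) [SigmaFinite (μ.trim hm)] {W f : Ω → ℝ}
    (hW : Integrable W μ) (hW0 : 0 ≤ᵐ[μ] W) (hf : StronglyMeasurable[m] f) :
    ∫ ω, μ[W|m] ω * f ω ∂μ = ∫ ω, W ω * f ω ∂μ := by
  by_cases hWf : Integrable (fun ω => W ω * f ω) μ
  · have hfW : Integrable (f * W) μ := hWf.congr (ae_of_all _ fun ω => mul_comm (W ω) (f ω))
    calc ∫ ω, μ[W|m] ω * f ω ∂μ = ∫ ω, μ[f * W|m] ω ∂μ :=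
          integral_congr_ae <| by
            filter_upwards [condExp_mul_of_stronglyMeasurable_left hf hfW hW] with ω hω
            rw [hω, Pi.mul_apply, mul_comm]
      _ = ∫ ω, W ω * f ω ∂μ := by
          rw [integral_condExp hm]
          simp only [Pi.mul_apply, mul_comm]
  · rw [integral_undef hWf, integral_undef (mt (integrable_condExp_mul_iff hm hW hW0 hf).1 hWf)]

lemma integrable_iff_and_integral_eq_of_one_sub_mul_odds_mul (hm : m ≤ m0) [IsFiniteMeasure μ] {Z p f : Ω → ℝ}
    (hZ : Integrable Z μ) (hZ0 : 0 ≤ᵐ[μ] Z) (hZ1 : Z ≤ᵐ[μ] 1)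
    (hp : StronglyMeasurable[m] p) (hZp : μ[Z|m] =ᵐ[μ] p) (hp1 : ∀ᵐ ω ∂μ, p ω < 1)
    (hf : StronglyMeasurable[m] f) :
    (Integrable (fun ω => (1 - Z ω) * (p ω / (1 - p ω) * f ω)) μ
        ↔ Integrable (fun ω => Z ω * f ω) μ) ∧
      ∫ ω, (1 - Z ω) * (p ω / (1 - p ω) * f ω) ∂μ = ∫ ω, Z ω * f ω ∂μ := by
  have h1Z : Integrable (fun ω => 1 - Z ω) μ := (integrable_const 1).sub hZ
  have h1Z0 : 0 ≤ᵐ[μ] fun ω => 1 - Z ω := by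
    filter_upwards [hZ1] with ω hω using sub_nonneg.2 hω
  have hg : StronglyMeasurable[m] fun ω => p ω / (1 - p ω) * f ω :=
    (hp.div (stronglyMeasurable_const.sub hp)).mul hf
  have hcondZ : (fun ω => μ[Z|m] ω * f ω) =ᵐ[μ] fun ω => p ω * f ω := by
    filter_upwards [hZp] with ω hω using by rw [hω]
  have hcond1Z : (fun ω => μ[fun ω => 1 - Z ω|m] ω * (p ω / (1 - p ω) * f ω))
      =ᵐ[μ] fun ω => p ω * f ω := by
    filter_upwards [condExp_sub (integrable_const 1) hZ m, hZp, hp1] with ω h1 hω hω1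
    have : 1 - p ω ≠ 0 := sub_ne_zero.2 hω1.ne'
    change μ[(fun _ => (1:ℝ)) - Z|m] ω * _ = _
    rw [h1, Pi.sub_apply, condExp_const hm, hω]
    field_simp
  constructor
  · rw [← integrable_condExp_mul_iff hm h1Z h1Z0 hg, integrable_congr hcond1Z,
      ← integrable_congr hcondZ, integrable_condExp_mul_iff hm hZ hZ0 hf]
  · rw [← integral_condExp_mul hm h1Z h1Z0 hg, integral_congr_ae hcond1Z,
      ← integral_congr_ae hcondZ, integral_condExp_mul hm hZ hZ0 hf]

lemma condExp_smul_measure_ae_eq (hm : m ≤ m0) [IsFiniteMeasure μ] {c : ℝ≥0∞}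
    (hc0 : c ≠ 0) (hc : c ≠ ∞) (f : Ω → ℝ) : (c • μ)[f|m] =ᵐ[μ] μ[f|m] := by
  by_cases hf : Integrable f μ
  · have : IsFiniteMeasure (c • μ) := μ.smul_finite hc
    have h := ae_eq_condExp_of_forall_setIntegral_eq hm (hf.smul_measure hc) (g := μ[f|m])
      (fun s _ _ => (integrable_condExp.smul_measure hc).integrableOn)
      (fun s hs _ => by
        rw [Measure.restrict_smul, integral_smul_measure, integral_smul_measure,
          setIntegral_condExp hm hf hs])
      stronglyMeasurable_condExp.aestronglyMeasurable
    rw [Measure.ae_ennreal_smul_measure_eq hc0] at h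
    exact h.symm
  · rw [condExp_of_not_integrable hf,
      condExp_of_not_integrable (mt (integrable_smul_measure hc0 hc).1 hf)]

lemma condExp_cond_ae_eq_restrict (hm : m ≤ m0) [IsFiniteMeasure μ] (s : Set Ω)
    (f : Ω → ℝ) : (μ[|s])[f|m] =ᵐ[μ.restrict s] (μ.restrict s)[f|m] := by
  rcases eq_or_ne (μ s) 0 with hs | hs
  · simp [Measure.restrict_eq_zero.2 hs, Filter.EventuallyEq]
  · exact condExp_smul_measure_ae_eq hm (ENNReal.inv_ne_zero.2 (measure_ne_top μ s))
      (ENNReal.inv_ne_top.2 hs) f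

lemma integrableOn_and_setIntegral_mul_condExp_cond_sub (hm : m ≤ m0) [IsFiniteMeasure μ] {s : Set Ω}
    {h Y M : Ω → ℝ} (hh : StronglyMeasurable[m] h) (hM : StronglyMeasurable[m] M)
    (hY : IntegrableOn Y s μ) (hMs : IntegrableOn M s μ)
    (hhYM : IntegrableOn (fun ω => h ω * (Y ω - M ω)) s μ) :
    IntegrableOn (fun ω => h ω * ((μ[|s])[Y|m] ω - M ω)) s μ ∧
      ∫ ω in s, h ω * ((μ[|s])[Y|m] ω - M ω) ∂μ = ∫ ω in s, h ω * (Y ω - M ω) ∂μ := by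
  have hM' : (μ.restrict s)[M|m] = M := condExp_of_stronglyMeasurable hm hM hMs
  have hpull : (fun ω => h ω * ((μ[|s])[Y|m] ω - M ω))
      =ᵐ[μ.restrict s] (μ.restrict s)[fun ω => h ω * (Y ω - M ω)|m] := by
    filter_upwards [condExp_cond_ae_eq_restrict hm s Y, condExp_sub hY hMs m,
      condExp_mul_of_stronglyMeasurable_left (g := Y - M) hh hhYM (hY.sub hMs)]
      with ω hcond hsub hmul
    change _ = (μ.restrict s)[h * (Y - M)|m] ω
    rw [hmul, Pi.mul_apply, hsub, Pi.sub_apply, hM', hcond]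
  exact ⟨integrable_condExp.congr hpull.symm, by rw [integral_congr_ae hpull, integral_condExp hm]⟩

end MeasureTheory

namespace ProbabilityTheory

variable {Ω : Type*} {m m0 : MeasurableSpace Ω} {μ : Measure[m0] Ω}

lemma one_sub_mul_eq_indicator {Z : Ω → ℝ} (hZ : ∀ ω, Z ω = 0 ∨ Z ω = 1) (u : Ω → ℝ) :
    (fun ω => (1 - Z ω) * u ω) = {ω | Z ω = 0}.indicator u := by
  funext ω
  rcases hZ ω with h | h <;> simp [h]

lemma mul_eq_indicator {Z : Ω → ℝ} (hZ : ∀ ω, Z ω = 0 ∨ Z ω = 1) (u : Ω → ℝ) :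
    (fun ω => Z ω * u ω) = {ω | Z ω = 1}.indicator u := by
  funext ω
  rcases hZ ω with h | h <;> simp [h]

theorem integral_condExp_cond_eq_of_odds_moment (hm : m ≤ m0) [IsFiniteMeasure μ]
    {Y Z p M : Ω → ℝ} (hY : Integrable Y μ) (hZm : Measurable Z)
    (hZb : ∀ ω, Z ω = 0 ∨ Z ω = 1) (hp : StronglyMeasurable[m] p) (hZp : μ[Z|m] =ᵐ[μ] p)
    (hp1 : ∀ᵐ ω ∂μ, p ω < 1) (hM : StronglyMeasurable[m] M) (hMint : Integrable M μ)
    (hw : Integrable (fun ω => (1 - Z ω) * p ω / (1 - p ω) * (Y ω - M ω)) μ)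
    (hmoment : ∫ ω, (1 - Z ω) * p ω / (1 - p ω) * (Y ω - M ω) ∂μ = 0) :
    ∫ ω, (μ[|{ω' | Z ω' = 0}])[Y|m] ω ∂μ[|{ω' | Z ω' = 1}]
      = ∫ ω, M ω ∂μ[|{ω' | Z ω' = 1}] := by
  set A0 := {ω' | Z ω' = 0}
  set A1 := {ω' | Z ω' = 1}
  set F := (μ[|A0])[Y|m]
  have hA0 : MeasurableSet A0 := hZm (measurableSet_singleton 0)
  have hA1 : MeasurableSet A1 := hZm (measurableSet_singleton 1)
  have hZ01 : ∀ ω, 0 ≤ Z ω ∧ Z ω ≤ 1 := fun ω => by rcases hZb ω with h | h <;> simp [h]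
  have hZ : Integrable Z μ := Integrable.of_bound hZm.aestronglyMeasurable 1
    (ae_of_all _ fun ω => by simpa [abs_of_nonneg (hZ01 ω).1] using (hZ01 ω).2)
  have hodds : StronglyMeasurable[m] fun ω => p ω / (1 - p ω) :=
    hp.div (stronglyMeasurable_const.sub hp)
  have hweight : (fun ω => (1 - Z ω) * p ω / (1 - p ω) * (Y ω - M ω))
      = A0.indicator fun ω => p ω / (1 - p ω) * (Y ω - M ω) := by
    rw [← one_sub_mul_eq_indicator hZb]
    funext ω
    ring
  rw [hweight, integrable_indicator_iff hA0] at hw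
  rw [hweight, integral_indicator hA0] at hmoment
  obtain ⟨hFint, hF⟩ := integrableOn_and_setIntegral_mul_condExp_cond_sub hm hodds hM hY.integrableOn
    hMint.integrableOn hw
  obtain ⟨hbalInt, hbal⟩ := integrable_iff_and_integral_eq_of_one_sub_mul_odds_mul hm hZ
    (ae_of_all _ fun ω => (hZ01 ω).1) (ae_of_all _ fun ω => (hZ01 ω).2) hp hZp hp1
    (f := fun ω => F ω - M ω) (stronglyMeasurable_condExp.sub hM)
  rw [one_sub_mul_eq_indicator hZb, mul_eq_indicator hZb, integrable_indicator_iff hA0,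
    integrable_indicator_iff hA1] at hbalInt
  rw [one_sub_mul_eq_indicator hZb, mul_eq_indicator hZb, integral_indicator hA0,
    integral_indicator hA1, hF, hmoment] at hbal
  have hFM := hbalInt.1 hFint
  have hMA1 : IntegrableOn M A1 μ := hMint.integrableOn
  have hA1eq : ∫ ω in A1, F ω ∂μ = ∫ ω in A1, M ω ∂μ := by
    have hFA1 : IntegrableOn F A1 μ :=
      (hFM.add hMA1).congr (ae_of_all _ fun ω => sub_add_cancel (F ω) (M ω))
    rw [integral_sub hFA1 hMA1] at hbal
    linarith
  simp only [ProbabilityTheory.cond, integral_smul_measure, hA1eq]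

end ProbabilityTheory

theorem dr_propensity_correct_side_latt_general
    {Ω : Type*} [MeasurableSpace Ω] (μ : Measure Ω) [IsProbabilityMeasure μ] {d : ℕ}
    (Y Z : Ω → ℝ) (X : Ω → Fin d → ℝ)
    (hY : Integrable Y μ)
    (hZm : Measurable Z) (hZb : ∀ ω, Z ω = 0 ∨ Z ω = 1)
    (hX : Measurable X)
    (G : (Fin d → ℝ) → ℝ) (hG : Measurable G)
    (hGrange : ∀ᵐ ω ∂μ, G (X ω) < 1)
    (hGcorrect : μ[Z | MeasurableSpace.comap X inferInstance]
      =ᵐ[μ] fun ω => G (X ω))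
    (m : ℝ → ℝ) (hm : Measurable m) (α : ℝ) (β : Fin d → ℝ)
    (hmInt : Integrable (fun ω => m (α + ∑ i, β i * X ω i)) μ)
    (hwInt : Integrable
      (fun ω => ((1 - Z ω) * G (X ω) / (1 - G (X ω)))
        * (Y ω - m (α + ∑ i, β i * X ω i))) μ)
    (hmoment : ∫ ω, ((1 - Z ω) * G (X ω) / (1 - G (X ω)))
        * (Y ω - m (α + ∑ i, β i * X ω i)) ∂μ = 0) :
    ∫ ω, ((μ[|{ω' | Z ω' = 0}])[Y | MeasurableSpace.comap X inferInstance]) ω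
        ∂μ[|{ω' | Z ω' = 1}]
      = ∫ ω, m (α + ∑ i, β i * X ω i) ∂μ[|{ω' | Z ω' = 1}] := by
  have hXc : Measurable[MeasurableSpace.comap X inferInstance] X := comap_measurable X
  have hlin : Measurable fun x : Fin d → ℝ => m (α + ∑ i, β i * x i) := by fun_prop
  exact integral_condExp_cond_eq_of_odds_moment hX.comap_le hY hZm hZb
    (hG.comp hXc).stronglyMeasurable hGcorrect hGrange (hlin.comp hXc).stronglyMeasurable
    hmInt hwInt hmoment

/-- (Double robustness for the LATT control mean, propensity-score side.) If
`G(X) = P(Z=1|X)` a.s. with `P(Z=1|X) < 1` a.s. and `P(Z=1) > 0`, and the moment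
condition `E{[(1-Z)G(X)/(1-G(X))](Y - m(α₀* + Xβ₀*))} = 0` holds, then
`E[μ₀(X) | Z=1] = E[m(α₀* + Xβ₀*) | Z=1]`, regardless of whether the outcome model is
correctly specified. -/
theorem dr_propensity_correct_side_latt
    {Ω : Type*} [MeasurableSpace Ω] (μ : Measure Ω) [IsProbabilityMeasure μ] {d : ℕ}
    (Y Z : Ω → ℝ) (X : Ω → Fin d → ℝ)
    (hYm : Measurable Y) (hY : Integrable Y μ)
    (hZm : Measurable Z) (hZb : ∀ ω, Z ω = 0 ∨ Z ω = 1)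
    (hX : Measurable X)
    (G : (Fin d → ℝ) → ℝ) (hG : Measurable G)
    (hGrange : ∀ᵐ ω ∂μ, G (X ω) < 1)
    (hGcorrect : μ[Z | MeasurableSpace.comap X inferInstance]
      =ᵐ[μ] fun ω => G (X ω))
    (m : ℝ → ℝ) (hm : Measurable m) (α : ℝ) (β : Fin d → ℝ)
    (hmInt : Integrable (fun ω => m (α + ∑ i, β i * X ω i)) μ)
    (hwInt : Integrable
      (fun ω => ((1 - Z ω) * G (X ω) / (1 - G (X ω)))
        * (Y ω - m (α + ∑ i, β i * X ω i))) μ)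
    (hZ1 : 0 < μ {ω | Z ω = 1})
    (hmoment : ∫ ω, ((1 - Z ω) * G (X ω) / (1 - G (X ω)))
        * (Y ω - m (α + ∑ i, β i * X ω i)) ∂μ = 0) :
    ∫ ω, ((μ[|{ω' | Z ω' = 0}])[Y | MeasurableSpace.comap X inferInstance]) ω
        ∂μ[|{ω' | Z ω' = 1}]
      = ∫ ω, m (α + ∑ i, β i * X ω i) ∂μ[|{ω' | Z ω' = 1}] :=
  dr_propensity_correct_side_latt_general μ Y Z X hY hZm hZb hX G hG hGrange hGcorrect m hm α β
    hmInt hwInt hmoment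
end
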